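/- Let A be a real m×n matrix and b ∈ ℝ^m, and let C = (A | b). Suppose λ is the smallest eigenvalue of the symmetric matrix CᵀC, that λ is a simple eigenvalue (its eigenspace is one-dimensional), and that v = (v̂ᵀ, γ)ᵀ ∈ ℝ^{n+1} is a unit eigenvector of CᵀC for λ with γ ≠ 0. Then x* = −(1/γ) v̂ satisfies η(x*)² = λ, and for every x ∈ ℝ^n with x ≠ x* one has η(x)² > λ; i.e., x* is the unique global minimizer of η. -/

import Mathlib

open Matrix BigOperators

/-- Euclidean norm of a vector in ℝ^k. -/
noncomputable def vnorm {k : ℕ} (v : Fin k → ℝ) : ℝ := Real.sqrt (∑ i, (v i) ^ 2)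

/-- η(x) = ‖Ax − b‖₂ / √(1 + xᵀx). -/
noncomputable def eta {m n : ℕ} (A : Matrix (Fin m) (Fin n) ℝ) (b : Fin m → ℝ)
    (x : Fin n → ℝ) : ℝ := vnorm (A.mulVec x - b) / Real.sqrt (1 + x ⬝ᵥ x)

/-!
Lift `x` to `z = (x, -1)`, so that `C z = A x - b` and `‖z‖² = 1 + xᵀx`; then `η(x)²` is
the Rayleigh quotient of `CᵀC` at `z`. Since `λ` is the least eigenvalue, `CᵀC - λ I` is
positive semidefinite, so the quotient is at least `λ`, with equality only when `z` lies in
the `λ`-eigenspace. That eigenspace is the line through `v`, and `(x, -1)` meets it only at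
`x = x*`, where `(x*, -1) = -v / γ`.
-/

namespace Matrix

theorem dotProduct_self_nonneg {ι : Type*} [Fintype ι] (z : ι → ℝ) : 0 ≤ z ⬝ᵥ z :=
  Finset.sum_nonneg fun i _ => mul_self_nonneg (z i)

theorem of_snoc_mulVec_snoc {R : Type*} [CommRing R] {m n : ℕ}
    (A : Matrix (Fin m) (Fin n) R) (b : Fin m → R) (x : Fin n → R) (c : R) :
    (of fun i => Fin.snoc (A i) (b i)) *ᵥ Fin.snoc x c = A *ᵥ x + c • b := by
  ext i
  simp [mulVec, dotProduct, Fin.sum_univ_castSucc, mul_comm]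

section LeastEigenvalue

variable {ι : Type*} [Fintype ι] [DecidableEq ι]

theorem posSemidef_sub_smul_one_of_forall_hasEigenvalue_le {M : Matrix ι ι ℝ}
    (hM : M.IsHermitian) {lam : ℝ}
    (hmin : ∀ μ : ℝ, Module.End.HasEigenvalue (toLin' M) μ → lam ≤ μ) :
    (M - lam • 1).PosSemidef := by
  refine posSemidef_iff_isHermitian_and_spectrum_nonneg.mpr
    ⟨hM.sub (isHermitian_one.smul (IsSelfAdjoint.all lam)), ?_⟩
  rw [← Algebra.algebraMap_eq_smul_one, ← spectrum.sub_singleton_eq]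
  rintro _ ⟨μ, hμ, _, rfl, rfl⟩
  rw [← spectrum_toLin', ← Module.End.hasEigenvalue_iff_mem_spectrum] at hμ
  exact sub_nonneg.mpr (hmin μ hμ)

theorem dotProduct_mulVec_sub_smul_one (M : Matrix ι ι ℝ) (lam : ℝ) (z : ι → ℝ) :
    z ⬝ᵥ ((M - lam • 1) *ᵥ z) = z ⬝ᵥ (M *ᵥ z) - lam * (z ⬝ᵥ z) := by
  rw [sub_mulVec, smul_mulVec, one_mulVec, dotProduct_sub, dotProduct_smul, smul_eq_mul]

theorem smul_dotProduct_le_of_posSemidef {M : Matrix ι ι ℝ} {lam : ℝ}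
    (hM : (M - lam • 1).PosSemidef) (z : ι → ℝ) :
    lam * (z ⬝ᵥ z) ≤ z ⬝ᵥ (M *ᵥ z) := by
  have := hM.dotProduct_mulVec_nonneg z
  rw [star_trivial, dotProduct_mulVec_sub_smul_one] at this
  linarith

theorem mulVec_eq_smul_of_posSemidef_of_dotProduct_eq {M : Matrix ι ι ℝ} {lam : ℝ}
    (hM : (M - lam • 1).PosSemidef) {z : ι → ℝ}
    (hz : z ⬝ᵥ (M *ᵥ z) = lam * (z ⬝ᵥ z)) :
    M *ᵥ z = lam • z := by
  have := (hM.dotProduct_mulVec_zero_iff z).mp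
    (by rw [star_trivial, dotProduct_mulVec_sub_smul_one, hz, sub_self])
  rwa [sub_mulVec, smul_mulVec, one_mulVec, sub_eq_zero] at this

end LeastEigenvalue

end Matrix

theorem Fin.snoc_dotProduct_snoc {R : Type*} [CommRing R] {n : ℕ}
    (x y : Fin n → R) (a c : R) :
    (Fin.snoc x a : Fin (n + 1) → R) ⬝ᵥ Fin.snoc y c = x ⬝ᵥ y + a * c := by
  simp [dotProduct, Fin.sum_univ_castSucc]

theorem Submodule.eq_of_finrank_eq_one_of_apply_eq {K ι : Type*} [Field K]
    {E : Submodule K (ι → K)} (hE : Module.finrank K E = 1) {u w : ι → K}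
    (hu : u ∈ E) (hw : w ∈ E) {i : ι} (hi : u i ≠ 0) (huw : u i = w i) : u = w := by
  have hu0 : (⟨u, hu⟩ : E) ≠ 0 := fun h =>
    hi (by rw [show u = 0 from congrArg Subtype.val h, Pi.zero_apply])
  obtain ⟨t, ht⟩ := (finrank_eq_one_iff_of_nonzero' _ hu0).mp hE ⟨w, hw⟩
  have htu : t • u = w := congrArg Subtype.val ht
  have ht1 : t = 1 := by
    have := congrFun htu i
    rw [Pi.smul_apply, smul_eq_mul, ← huw] at this
    exact (mul_eq_right₀ hi).mp this
  rw [← htu, ht1, one_smul]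

theorem vnorm_sq {k : ℕ} (v : Fin k → ℝ) : vnorm v ^ 2 = v ⬝ᵥ v := by
  rw [vnorm, Real.sq_sqrt (by positivity), dotProduct]
  simp_rw [sq]

theorem eta_sq_eq_rayleigh {m n : ℕ} (A : Matrix (Fin m) (Fin n) ℝ) (b : Fin m → ℝ)
    {C : Matrix (Fin m) (Fin (n + 1)) ℝ} (hC : C = of fun i => Fin.snoc (A i) (b i))
    (x : Fin n → ℝ) :
    eta A b x ^ 2 =
      (Fin.snoc x (-1) : Fin (n + 1) → ℝ) ⬝ᵥ ((Cᵀ * C) *ᵥ Fin.snoc x (-1)) /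
        ((Fin.snoc x (-1) : Fin (n + 1) → ℝ) ⬝ᵥ Fin.snoc x (-1)) := by
  rw [eta, div_pow, vnorm_sq, Real.sq_sqrt (by linarith [dotProduct_self_nonneg x]),
    ← mulVec_mulVec, dotProduct_mulVec, vecMul_transpose, hC,
    of_snoc_mulVec_snoc, Fin.snoc_dotProduct_snoc]
  congr 1
  · simp [sub_eq_add_neg]
  · ring

theorem stmt_10_general {m n : ℕ} (A : Matrix (Fin m) (Fin n) ℝ) (b : Fin m → ℝ)
    (C : Matrix (Fin m) (Fin (n + 1)) ℝ)
    (hC : C = Matrix.of fun i => Fin.snoc (A i) (b i))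
    (lam : ℝ) (v : Fin (n + 1) → ℝ)
    (hv : (Cᵀ * C).mulVec v = lam • v)
    (hmin : ∀ μ : ℝ, Module.End.HasEigenvalue (Matrix.toLin' (Cᵀ * C)) μ → lam ≤ μ)
    (hsimple : Module.finrank ℝ (Module.End.eigenspace (Matrix.toLin' (Cᵀ * C)) lam) = 1)
    (hγ : v (Fin.last n) ≠ 0)
    (xstar : Fin n → ℝ)
    (hxstar : xstar = fun i => -(1 / v (Fin.last n)) * v i.castSucc) :
    eta A b xstar ^ 2 = lam ∧ ∀ x : Fin n → ℝ, x ≠ xstar → eta A b x ^ 2 > lam := by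
  set z : (Fin n → ℝ) → Fin (n + 1) → ℝ := fun x => Fin.snoc x (-1)
  have hpsd : (Cᵀ * C - lam • 1).PosSemidef :=
    posSemidef_sub_smul_one_of_forall_hasEigenvalue_le
      (conjTranspose_eq_transpose_of_trivial C ▸ isHermitian_conjTranspose_mul_self C) hmin
  have hz_pos (x : Fin n → ℝ) : 0 < z x ⬝ᵥ z x := by
    rw [Fin.snoc_dotProduct_snoc]
    linarith [dotProduct_self_nonneg x]
  have hz_star : z xstar = (-(1 / v (Fin.last n))) • v := by
    ext j
    refine Fin.lastCases ?_ (fun i => ?_) j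
    · simp [z, hγ]
    · simp [z, hxstar]
  have hM_star : (Cᵀ * C) *ᵥ z xstar = lam • z xstar := by
    rw [hz_star, mulVec_smul, hv, smul_comm]
  refine ⟨?_, fun x hx => ?_⟩
  · rw [eta_sq_eq_rayleigh A b hC, hM_star, dotProduct_smul, smul_eq_mul,
      mul_div_cancel_right₀ _ (hz_pos xstar).ne']
  · rw [gt_iff_lt, eta_sq_eq_rayleigh A b hC, lt_div_iff₀ (hz_pos x)]
    refine (smul_dotProduct_le_of_posSemidef hpsd (z x)).lt_of_ne fun heq => hx ?_
    have hM_x := mulVec_eq_smul_of_posSemidef_of_dotProduct_eq hpsd heq.symm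
    have hz_eq := Submodule.eq_of_finrank_eq_one_of_apply_eq hsimple
      (Module.End.mem_eigenspace_iff.mpr hM_x) (Module.End.mem_eigenspace_iff.mpr hM_star)
      (i := Fin.last n) (by simp [z]) (by simp [z])
    simpa [z] using congrArg Fin.init hz_eq

theorem stmt_10 {m n : ℕ} (A : Matrix (Fin m) (Fin n) ℝ) (b : Fin m → ℝ)
    (C : Matrix (Fin m) (Fin (n + 1)) ℝ)
    (hC : C = Matrix.of fun i => Fin.snoc (A i) (b i))
    (lam : ℝ) (v : Fin (n + 1) → ℝ)
    (hv : (Cᵀ * C).mulVec v = lam • v) (hvnorm : vnorm v = 1)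
    (hmin : ∀ μ : ℝ, Module.End.HasEigenvalue (Matrix.toLin' (Cᵀ * C)) μ → lam ≤ μ)
    (hsimple : Module.finrank ℝ (Module.End.eigenspace (Matrix.toLin' (Cᵀ * C)) lam) = 1)
    (hγ : v (Fin.last n) ≠ 0)
    (xstar : Fin n → ℝ)
    (hxstar : xstar = fun i => -(1 / v (Fin.last n)) * v i.castSucc) :
    eta A b xstar ^ 2 = lam ∧ ∀ x : Fin n → ℝ, x ≠ xstar → eta A b x ^ 2 > lam :=
  stmt_10_general A b C hC lam v hv hmin hsimple hγ xstar hxstar
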